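/- arXiv:2006.07628 — 4 statements merged into one kernel-verified Lean document; each statement's English description precedes it below -/
import Mathlib

section
/- Let G be a finite simple graph on n vertices that has neighborhood independence at most β. Then for every independent set I of G, the sum over v ∈ I of the degree of v is at most n·β. -/
/-- If a finite simple graph `G` on `n` vertices has neighborhood independence at most
`β`, then for every independent set `I` of `G`, the sum of the degrees of the vertices
of `I` is at most `n * β`. -/
theorem indep_set_degree_sum_le
    {V : Type*} [Fintype V] [DecidableEq V]
    (G : SimpleGraph V) [DecidableRel G.Adj]
    (n : ℕ) (hn : Fintype.card V = n)
    (β : ℕ)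
    (hβ : ∀ w : V, ∀ s : Finset V, (↑s : Set V) ⊆ G.neighborSet w →
      (↑s : Set V).Pairwise (fun a b => ¬ G.Adj a b) → s.card ≤ β)
    (I : Finset V) (hI : (↑I : Set V).Pairwise (fun a b => ¬ G.Adj a b)) :
    ∑ x ∈ I, G.degree x ≤ n * β := by
  have key : ∑ x ∈ I, G.degree x
      = ∑ w : V, (I.filter (fun x => G.Adj w x)).card := by
    simp only [SimpleGraph.degree, SimpleGraph.neighborFinset_eq_filter,
      Finset.card_filter]
    rw [Finset.sum_comm]
    refine Finset.sum_congr rfl fun w _ => Finset.sum_congr rfl fun x _ => ?_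
    simp only [G.adj_comm]
  rw [key, ← hn, Fintype.card, ← smul_eq_mul, ← Finset.sum_const]
  apply Finset.sum_le_sum
  intro w _
  apply hβ w
  · intro x hx
    simp only [Finset.coe_filter, Set.mem_setOf_eq] at hx
    exact hx.2
  · exact hI.mono (by simp only [Finset.coe_filter]; exact fun x hx => hx.1)
end

section
/- Let β ≥ 1 and let G be a finite simple graph that has neighborhood independence at most β. Then for every maximal independent set M of G and every independent set I of G, |I| ≤ β · |M|. In particular, every maximal independent set is a β-approximation of a maximum independent set. -/
/-- If `β ≥ 1` and a finite simple graph `G` has neighborhood independence at most `β`,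
then for every maximal independent set `M` and every independent set `I` of `G`,
`|I| ≤ β * |M|`; i.e., every maximal independent set is a `β`-approximation of a
maximum independent set. -/
theorem mis_beta_approx
    {V : Type*} [Fintype V] [DecidableEq V]
    (G : SimpleGraph V)
    (β : ℕ) (hβ1 : 1 ≤ β)
    (hβ : ∀ w : V, ∀ s : Finset V, (↑s : Set V) ⊆ G.neighborSet w →
      (↑s : Set V).Pairwise (fun a b => ¬ G.Adj a b) → s.card ≤ β)
    (M : Finset V) (hMind : (↑M : Set V).Pairwise (fun a b => ¬ G.Adj a b))
    (hMmax : ∀ J : Finset V, (↑J : Set V).Pairwise (fun a b => ¬ G.Adj a b) →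
      M ⊆ J → J = M)
    (I : Finset V) (hI : (↑I : Set V).Pairwise (fun a b => ¬ G.Adj a b)) :
    I.card ≤ β * M.card := by
  classical
  -- every vertex not in M has a neighbor in M
  have hdom : ∀ v : V, v ∉ M → ∃ m ∈ M, G.Adj v m := by
    intro v hv
    by_contra h
    push_neg at h
    have hins : ((↑(insert v M) : Set V)).Pairwise (fun a b => ¬ G.Adj a b) := by
      rw [Finset.coe_insert]
      refine Set.Pairwise.insert hMind ?_
      intro m hm _
      exact ⟨fun hadj => h m hm hadj, fun hadj => h m hm (G.adj_symm hadj)⟩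
    have := hMmax (insert v M) hins (Finset.subset_insert v M)
    exact hv (this ▸ Finset.mem_insert_self v M)
  set f : V → V := fun v => if h : v ∈ M then v else
    if h2 : ∃ m ∈ M, G.Adj v m then h2.choose else v with hf
  have hmaps : ∀ v ∈ I, f v ∈ M := by
    intro v _
    by_cases h : v ∈ M
    · simp [hf, h]
    · have h2 := hdom v h
      simp only [hf, h, dif_neg, not_false_iff, dif_pos h2]
      exact h2.choose_spec.1
  refine (Finset.card_le_mul_card_image_of_maps_to hmaps β ?_)
  intro m _
  by_cases hmI : m ∈ I.filter (fun v => f v = m)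
  · -- then m ∈ I, and the fiber is {m}
    have hmI' : m ∈ I := (Finset.mem_filter.mp hmI).1
    have : I.filter (fun v => f v = m) ⊆ {m} := by
      intro v hv
      rw [Finset.mem_singleton]
      by_contra hne
      obtain ⟨hvI, hfv⟩ := Finset.mem_filter.mp hv
      by_cases h : v ∈ M
      · exact hne (by simpa [hf, h] using hfv)
      · have h2 := hdom v h
        have hfv' : h2.choose = m := by simpa [hf, h, dif_pos h2] using hfv
        have hadj : G.Adj v m := hfv' ▸ h2.choose_spec.2
        exact hI hvI hmI' hne hadj
    calc (I.filter (fun v => f v = m)).card ≤ ({m} : Finset V).card :=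
          Finset.card_le_card this
      _ = 1 := Finset.card_singleton m
      _ ≤ β := hβ1
  · -- fiber lies in the neighborhood of m
    refine hβ m (I.filter (fun v => f v = m)) ?_ ?_
    · intro v hv
      have hv' := hv
      rw [Finset.mem_coe, Finset.mem_filter] at hv'
      obtain ⟨hvI, hfv⟩ := hv'
      by_cases h : v ∈ M
      · have : v = m := by simpa [hf, h] using hfv
        exact absurd (this ▸ hv) (by simpa using hmI)
      · have h2 := hdom v h
        have hfv' : h2.choose = m := by simpa [hf, h, dif_pos h2] using hfv
        have hadj : G.Adj v m := hfv' ▸ h2.choose_spec.2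
        exact (G.mem_neighborSet m v).mpr (G.adj_symm hadj)
    · exact hI.mono (by intro x hx; simp only [Finset.coe_filter, Set.mem_setOf_eq] at hx; exact hx.1)
end

section
/- Let n be even, let M* be a perfect matching on a vertex set V of size n, let G be the graph obtained from the complete graph K_n by removing the edges of M*, and let M be a maximal matching of G. Suppose T ⊆ V is a set of vertices such that no vertex of T is matched by M to a vertex outside T. Then the number of edges of M with both endpoints in T is at least (|T| − 2)/2. -/
/-- Let `V` have even cardinality `n`, let the perfect matching `M*` be given by the
fixed-point-free involution `m`, let `G` be the complete graph on `V` minus the edges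
of `M*`, and let `M` be a maximal matching of `G`. If `T ⊆ V` is a set of vertices such
that no vertex of `T` is matched by `M` to a vertex outside `T`, then the number of
edges of `M` with both endpoints in `T` is at least `(|T| - 2) / 2`. -/
theorem maximal_matching_edges_inside_set
    {V : Type*} [Fintype V] [DecidableEq V]
    (n : ℕ) (hn : Fintype.card V = n) (hev : Even n)
    (m : V → V) (hfix : ∀ v, m v ≠ v) (hinv : ∀ v, m (m v) = v)
    (G : SimpleGraph V) (hG : ∀ u v, G.Adj u v ↔ u ≠ v ∧ m u ≠ v)
    (M : Finset (Sym2 V))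
    (hMedges : ∀ e ∈ M, e ∈ G.edgeSet)
    (hMdisj : (↑M : Set (Sym2 V)).Pairwise (fun e f => ∀ x, x ∈ e → x ∉ f))
    (hMmax : ∀ u w : V, G.Adj u w → ∃ e ∈ M, u ∈ e ∨ w ∈ e)
    (T : Finset V)
    (hT : ∀ v ∈ T, ∀ u : V, s(v, u) ∈ M → u ∈ T) :
    ((T.card : ℚ) - 2) / 2 ≤ (M.filter (fun e => ∀ x, x ∈ e → x ∈ T)).card := by
  classical
  set F := M.filter (fun e => ∀ x, x ∈ e → x ∈ T) with hF
  -- a vertex of T covered by M is covered by F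
  have hcov : ∀ v ∈ T, (∃ e ∈ M, v ∈ e) → ∃ e ∈ F, v ∈ e := by
    rintro v hv ⟨e, heM, hve⟩
    obtain ⟨u, rfl⟩ := Sym2.mem_iff_exists.mp hve
    have hu : u ∈ T := hT v hv u heM
    refine ⟨s(v, u), ?_, hve⟩
    rw [hF, Finset.mem_filter]
    refine ⟨heM, fun x hx => ?_⟩
    rcases Sym2.mem_iff.mp hx with rfl | rfl
    · exact hv
    · exact hu
  set S := T.filter (fun v => ∃ e ∈ M, v ∈ e) with hS
  set U := T.filter (fun v => ¬ ∃ e ∈ M, v ∈ e) with hU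
  -- unmatched vertices: at most 2
  have hkey : ∀ u ∈ U, ∀ w ∈ U, u ≠ w → m u = w := by
    intro u hu w hw huw
    by_contra hm
    have hadj : G.Adj u w := (hG u w).mpr ⟨huw, hm⟩
    obtain ⟨e, heM, he⟩ := hMmax u w hadj
    rw [hU, Finset.mem_filter] at hu hw
    rcases he with he | he
    · exact hu.2 ⟨e, heM, he⟩
    · exact hw.2 ⟨e, heM, he⟩
  have hU2 : U.card ≤ 2 := by
    by_contra h
    push_neg at h
    obtain ⟨a, b, c, ha, hb, hc, hab, hac, hbc⟩ := Finset.two_lt_card_iff.mp h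
    have h1 := hkey a ha b hb hab
    have h2 := hkey a ha c hc hac
    exact hbc (h1 ▸ h2 ▸ rfl)
  -- choice of a covering edge
  have hSF : ∀ v ∈ S, ∃ e ∈ F, v ∈ e := by
    intro v hv
    rw [hS, Finset.mem_filter] at hv
    exact hcov v hv.1 hv.2
  set f : V → Sym2 V := fun v => if h : ∃ e ∈ F, v ∈ e then h.choose else s(v, v) with hf
  have hf1 : ∀ v ∈ S, f v ∈ F ∧ v ∈ f v := by
    intro v hv
    have h := hSF v hv
    simp only [hf, dif_pos h]
    exact ⟨h.choose_spec.1, h.choose_spec.2⟩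
  -- fibers of f on S have size at most 2
  have hfiber : ∀ a ∈ S.image f, (S.filter fun x => f x = a).card ≤ 2 := by
    intro a ha
    obtain ⟨v, hv, rfl⟩ := Finset.mem_image.mp ha
    obtain ⟨u, hu⟩ := Sym2.mem_iff_exists.mp (hf1 v hv).2
    have hsub : (S.filter fun x => f x = f v) ⊆ {v, u} := by
      intro w hw
      rw [Finset.mem_filter] at hw
      have hwm : w ∈ f v := hw.2 ▸ (hf1 w hw.1).2
      rw [hu] at hwm
      rcases Sym2.mem_iff.mp hwm with rfl | rfl
      · exact Finset.mem_insert_self _ _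
      · exact Finset.mem_insert_of_mem (Finset.mem_singleton_self _)
    calc (S.filter fun x => f x = f v).card ≤ ({v, u} : Finset V).card :=
          Finset.card_le_card hsub
      _ ≤ 2 := Finset.card_insert_le _ _ |>.trans (by simp)
  have hScard : S.card ≤ 2 * F.card := by
    have h1 : S.card ≤ 2 * (S.image f).card := Finset.card_le_mul_card_image S 2 hfiber
    have h2 : S.image f ⊆ F := by
      intro a ha
      obtain ⟨v, hv, rfl⟩ := Finset.mem_image.mp ha
      exact (hf1 v hv).1
    exact h1.trans (Nat.mul_le_mul_left 2 (Finset.card_le_card h2))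
  have hsplit : S.card + U.card = T.card :=
    Finset.card_filter_add_card_filter_not _
  have hfinal : T.card ≤ 2 * F.card + 2 := by omega
  have : (T.card : ℚ) ≤ 2 * F.card + 2 := by exact_mod_cast hfinal
  rw [div_le_iff₀ (by norm_num : (0:ℚ) < 2)]
  linarith
end

section
/- Let G be a finite simple graph whose vertices are enumerated v_1, v_2, ..., v_n in non-decreasing order of degree (deg(v_1) ≤ deg(v_2) ≤ ... ≤ deg(v_n)), and let M be the set constructed by the greedy procedure: starting from M_0 = ∅, set M_i = M_{i-1} ∪ {v_i} if v_i has no neighbor in M_{i-1}, and M_i = M_{i-1} otherwise; finally M = M_n. Then |M| ≥ Σ_{v ∈ V} 1/(deg(v) + 1), i.e., the greedy algorithm run in increasing degree order produces an independent set of at least the Caro–Wei bound size. -/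
/-- If the vertices of a finite simple graph `G` are enumerated `v 0, ..., v (n-1)` in
non-decreasing order of degree, then the independent set `M n` produced by the greedy
algorithm has size at least the Caro–Wei bound `∑_{x ∈ V} 1 / (deg(x) + 1)`. -/
theorem greedy_min_degree_order_caro_wei
    {V : Type*} [Fintype V] [DecidableEq V]
    (G : SimpleGraph V) [DecidableRel G.Adj]
    (n : ℕ) (hn : Fintype.card V = n)
    (v : Fin n → V) (hv : Function.Bijective v)
    (hsorted : ∀ i j : Fin n, i ≤ j → G.degree (v i) ≤ G.degree (v j))
    (M : ℕ → Finset V)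
    (hM0 : M 0 = ∅)
    (hMstep : ∀ i (h : i < n),
      M (i + 1) =
        if ∀ u ∈ M i, ¬ G.Adj (v ⟨i, h⟩) u then insert (v ⟨i, h⟩) (M i) else M i) :
    ∑ x : V, (1 : ℚ) / (G.degree x + 1) ≤ (M n).card := by
  classical
  -- monotonicity of M
  have hmono : ∀ k, k < n → M k ⊆ M (k + 1) := by
    intro k hk
    rw [hMstep k hk]
    split
    · exact Finset.subset_insert _ _
    · exact Finset.Subset.refl _
  have hmono2 : ∀ k, k ≤ n → ∀ j, j ≤ k → M j ⊆ M k := by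
    intro k
    induction k with
    | zero =>
      intro _ j hj
      interval_cases j
      exact Finset.Subset.refl _
    | succ k ih =>
      intro hk j hj
      rcases Nat.lt_or_ge j (k + 1) with h | h
      · exact (ih (Nat.le_of_succ_le hk) j (Nat.lt_succ_iff.mp h)).trans
          (hmono k (Nat.lt_of_succ_le hk))
      · have : j = k + 1 := le_antisymm hj h
        subst this; exact Finset.Subset.refl _
  -- membership characterization
  have hmem : ∀ k, k ≤ n → ∀ u ∈ M k, ∃ i : Fin n, (i : ℕ) < k ∧ v i = u := by
    intro k
    induction k with
    | zero => intro _ u hu; rw [hM0] at hu; simp at hu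
    | succ k ih =>
      intro hk u hu
      have hkn : k < n := Nat.lt_of_succ_le hk
      rw [hMstep k hkn] at hu
      split_ifs at hu with hcond
      · rcases Finset.mem_insert.mp hu with h | h
        · exact ⟨⟨k, hkn⟩, Nat.lt_succ_self k, h.symm⟩
        · obtain ⟨i, hi, hvi⟩ := ih (Nat.le_of_succ_le hk) u h
          exact ⟨i, hi.trans (Nat.lt_succ_self k), hvi⟩
      · obtain ⟨i, hi, hvi⟩ := ih (Nat.le_of_succ_le hk) u hu
        exact ⟨i, hi.trans (Nat.lt_succ_self k), hvi⟩
  -- every vertex is covered by a member of M n of no larger degree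
  have key : ∀ x : V, ∃ m, m ∈ M n ∧ (m = x ∨ G.Adj x m) ∧ G.degree m ≤ G.degree x := by
    intro x
    obtain ⟨j, rfl⟩ := hv.2 x
    have hj : (j : ℕ) < n := j.2
    by_cases hc : ∀ u ∈ M (j : ℕ), ¬ G.Adj (v ⟨(j : ℕ), hj⟩) u
    · refine ⟨v j, ?_, Or.inl rfl, le_refl _⟩
      have hstep : v j ∈ M ((j : ℕ) + 1) := by
        rw [hMstep _ hj, if_pos hc, Fin.eta]
        exact Finset.mem_insert_self _ _
      exact hmono2 n le_rfl ((j : ℕ) + 1) hj hstep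
    · push_neg at hc
      obtain ⟨u, hu, hadj⟩ := hc
      obtain ⟨i, hi, rfl⟩ := hmem (j : ℕ) (le_of_lt hj) u hu
      refine ⟨v i, hmono2 n le_rfl (j : ℕ) (le_of_lt hj) hu, Or.inr ?_,
        hsorted i j (le_of_lt hi)⟩
      rw [Fin.eta] at hadj
      exact hadj
  choose g hg1 hg2 hg3 using key
  have hdegpos : ∀ m : V, (0 : ℚ) < (G.degree m : ℚ) + 1 := by
    intro m; positivity
  calc ∑ x : V, (1 : ℚ) / (G.degree x + 1)
      ≤ ∑ x : V, (1 : ℚ) / (G.degree (g x) + 1) := by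
        apply Finset.sum_le_sum
        intro x _
        apply one_div_le_one_div_of_le (hdegpos (g x))
        have := hg3 x
        push_cast
        linarith [(Nat.cast_le (α := ℚ)).mpr this]
    _ = ∑ m ∈ M n, ∑ x ∈ Finset.univ.filter (fun x => g x = m),
          (1 : ℚ) / (G.degree (g x) + 1) :=
        (Finset.sum_fiberwise_of_maps_to (fun x _ => hg1 x) _).symm
    _ ≤ ∑ m ∈ M n, 1 := by
        apply Finset.sum_le_sum
        intro m _
        have hsub : Finset.univ.filter (fun x => g x = m) ⊆
            insert m (G.neighborFinset m) := by
          intro x hx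
          have hgx : g x = m := (Finset.mem_filter.mp hx).2
          rcases hg2 x with h | h
          · rw [hgx] at h
            exact Finset.mem_insert.mpr (Or.inl h.symm)
          · rw [hgx] at h
            exact Finset.mem_insert.mpr (Or.inr (by
              rw [SimpleGraph.mem_neighborFinset]; exact h.symm))
        have hcard : (Finset.univ.filter (fun x => g x = m)).card ≤ G.degree m + 1 := by
          calc (Finset.univ.filter (fun x => g x = m)).card
              ≤ (insert m (G.neighborFinset m)).card := Finset.card_le_card hsub
            _ ≤ (G.neighborFinset m).card + 1 := Finset.card_insert_le _ _
            _ = G.degree m + 1 := by rw [G.card_neighborFinset_eq_degree]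
        calc ∑ x ∈ Finset.univ.filter (fun x => g x = m),
              (1 : ℚ) / (G.degree (g x) + 1)
            = ∑ x ∈ Finset.univ.filter (fun x => g x = m),
              (1 : ℚ) / (G.degree m + 1) := by
              apply Finset.sum_congr rfl
              intro x hx
              rw [(Finset.mem_filter.mp hx).2]
          _ = (Finset.univ.filter (fun x => g x = m)).card * ((1 : ℚ) / (G.degree m + 1)) := by
              rw [Finset.sum_const, nsmul_eq_mul]
          _ ≤ ((G.degree m : ℚ) + 1) * ((1 : ℚ) / (G.degree m + 1)) := by
              apply mul_le_mul_of_nonneg_right _ (by positivity)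
              have := (Nat.cast_le (α := ℚ)).mpr hcard
              push_cast at this
              linarith
          _ = 1 := mul_one_div_cancel (ne_of_gt (hdegpos m))
    _ = (M n).card := by
        rw [Finset.sum_const, nsmul_eq_mul, mul_one]
end
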